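/- Define S₁, S₂ : g̃ → g̃ by S₁(f,u) = (0, f_{xxx}) and S₂(f,u) = (f_y, u_y). Then both maps satisfy the 1-cocycle identity S_i([a,b]) = [a, S_i(b)] − [b, S_i(a)] for all a, b ∈ g̃. (These are the Souriau cocycles associated with the central-extension 2-cocycles μ₁ and μ₂, the coadjoint action of g̃ being identified with the adjoint action via the invariant pairing.) -/

import Mathlib

open Real intervalIntegral
open scoped ContDiff

noncomputable section

/-- Functions on `ℝ²` (representing functions on the 2-torus `S¹ × S¹`). -/
abbrev F2 : Type := ℝ × ℝ → ℂ

/-- `C∞₂π(ℝ²,ℂ)`: smooth functions `ℝ² → ℂ` which are `2π`-periodic in each variable. -/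
def SmoothPer2 (f : F2) : Prop :=
  ContDiff ℝ ∞ f ∧ (∀ p : ℝ × ℝ, f (p.1 + 2 * π, p.2) = f p)
    ∧ (∀ p : ℝ × ℝ, f (p.1, p.2 + 2 * π) = f p)

/-- Partial derivative in the first variable `x`. -/
def pdx (f : F2) : F2 := fun p => deriv (fun t => f (t, p.2)) p.1

/-- Partial derivative in the second variable `y`. -/
def pdy (f : F2) : F2 := fun p => deriv (fun t => f (p.1, t)) p.2

/-- Double integral `∫₀^{2π}∫₀^{2π} f dx dy` over the torus. -/
def integ2 (f : F2) : ℂ := ∫ y in (0:ℝ)..(2 * π), ∫ x in (0:ℝ)..(2 * π), f (x, y)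

/-- Membership in the looped cotangent Virasoro algebra `g̃`: a pair `(f,u)` of
functions in `C∞₂π(ℝ²,ℂ)`, `f` representing the loop of vector fields `f(x,y)·∂/∂x`
and `u` the loop of quadratic differentials `u(x,y)·dx²`. -/
def MemG (a : F2 × F2) : Prop := SmoothPer2 a.1 ∧ SmoothPer2 a.2

/-- The Lie bracket of the looped cotangent Virasoro algebra `g̃ = L(Vect(S¹) ⋉ F₂)`:
`[(f,u),(g,v)] = (f·g_x − f_x·g, f·v_x + 2·f_x·v − g·u_x − 2·g_x·u)`. -/
def gBracket (a b : F2 × F2) : F2 × F2 :=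
  (fun p => a.1 p * pdx b.1 p - pdx a.1 p * b.1 p,
   fun p => a.1 p * pdx b.2 p + 2 * pdx a.1 p * b.2 p
     - b.1 p * pdx a.2 p - 2 * pdx b.1 p * a.2 p)

/-- The Souriau 1-cocycle `S₁(f,u) = (0, f_{xxx})` associated with the
Virasoro-type central extension `μ₁` of `g̃`. -/
def S1 (a : F2 × F2) : F2 × F2 := (fun _ => 0, pdx (pdx (pdx a.1)))

/-- The Souriau 1-cocycle `S₂(f,u) = (f_y, u_y)` associated with the
Kac–Moody-type central extension `μ₂` of `g̃`. -/
def S2 (a : F2 × F2) : F2 × F2 := (pdy a.1, pdy a.2)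

/-! Smooth functions on a normed space form a commutative algebra on which every directional
derivative acts as a derivation, and any two directional derivatives commute (symmetry of second
derivatives). Both cocycle identities hold for the bracket built from an arbitrary derivation `D`
of a commutative ring: the first is the identity
`D³(f·Dg − Df·g) = f·D⁴g + 2·Df·D³g − g·D⁴f − 2·Dg·D³f`, the second says that a derivation
commuting with `D` is a derivation of the bracket. They transfer to `g̃` along the inclusion of
smooth functions into all functions, with `D = ∂ₓ` and `E = ∂_y`. -/

theorem Derivation.map_ofNat {R A M : Type*} [CommSemiring R] [CommSemiring A] [AddCommMonoid M]
    [Algebra R A] [Module A M] [Module R M] (D : Derivation R A M) (n : ℕ) [n.AtLeastTwo] :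
    D (ofNat(n) : A) = 0 := by
  rw [← Nat.cast_ofNat]
  exact D.map_natCast n

section CotangentBracket

variable {R A B : Type*} [CommRing R] [CommRing A] [Algebra R A] [CommRing B]

def cotangentBracket (D : A → A) (a b : A × A) : A × A :=
  (a.1 * D b.1 - D a.1 * b.1, a.1 * D b.2 + 2 * D a.1 * b.2 - b.1 * D a.2 - 2 * D b.1 * a.2)

def virasoroCocycle (D : A → A) (a : A × A) : A × A := (0, D (D (D a.1)))

theorem virasoroCocycle_cotangentBracket (D : Derivation R A A) (a b : A × A) :
    virasoroCocycle D (cotangentBracket D a b) =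
      cotangentBracket D a (virasoroCocycle D b) - cotangentBracket D b (virasoroCocycle D a) := by
  refine Prod.ext (by simp [virasoroCocycle, cotangentBracket]) ?_
  simp only [virasoroCocycle, cotangentBracket, Prod.snd_sub, map_sub, map_add, map_zero,
    Derivation.leibniz, smul_eq_mul]
  ring

theorem prodMap_cotangentBracket_of_commute (D E : Derivation R A A)
    (hDE : ∀ x, E (D x) = D (E x)) (a b : A × A) :
    Prod.map E E (cotangentBracket D a b)
      = cotangentBracket D a (Prod.map E E b) - cotangentBracket D b (Prod.map E E a) := by
  ext <;>
  · simp only [cotangentBracket, Prod.map_fst, Prod.map_snd, Prod.fst_sub, Prod.snd_sub, map_sub,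
      map_add, Derivation.leibniz, Derivation.map_ofNat, smul_eq_mul, hDE]
    ring

theorem prodMap_cotangentBracket (φ : A →+* B) {D : A → A} {D' : B → B}
    (h : Function.Semiconj φ D D') (a b : A × A) :
    φ.prodMap φ (cotangentBracket D a b)
      = cotangentBracket D' (φ.prodMap φ a) (φ.prodMap φ b) := by
  ext <;> simp [cotangentBracket, h.eq, map_ofNat]

theorem prodMap_virasoroCocycle (φ : A →+* B) {D : A → A} {D' : B → B}
    (h : Function.Semiconj φ D D') (a : A × A) :
    φ.prodMap φ (virasoroCocycle D a) = virasoroCocycle D' (φ.prodMap φ a) := by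
  ext <;> simp [virasoroCocycle, h.eq]

theorem prodMap_map (φ : A →+* B) {D : A → A} {D' : B → B}
    (h : Function.Semiconj φ D D') (a : A × A) :
    φ.prodMap φ (Prod.map D D a) = Prod.map D' D' (φ.prodMap φ a) := by
  ext <;> simp [h.eq]

end CotangentBracket

section Smooth

variable {E : Type*} [NormedAddCommGroup E] [NormedSpace ℝ E]

variable (E) in
def smoothFunctions : Subalgebra ℂ (E → ℂ) where
  carrier := {f | ContDiff ℝ ∞ f}
  mul_mem' {f g} (hf : ContDiff ℝ ∞ f) (hg : ContDiff ℝ ∞ g) := hf.mul hg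
  add_mem' {f g} (hf : ContDiff ℝ ∞ f) (hg : ContDiff ℝ ∞ g) := hf.add hg
  algebraMap_mem' c := (contDiff_const : ContDiff ℝ ∞ fun _ : E => c)

namespace smoothFunctions

theorem contDiff (f : smoothFunctions E) : ContDiff ℝ ∞ (f : E → ℂ) := f.2

theorem differentiable (f : smoothFunctions E) : Differentiable ℝ (f : E → ℂ) :=
  (contDiff f).differentiable (by simp)

theorem fderiv_apply_mem (f : smoothFunctions E) (v : E) :
    (fun x => fderiv ℝ f x v) ∈ smoothFunctions E :=
  ((contDiff f).fderiv_right (m := ∞) le_rfl).clm_apply contDiff_const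

def dirDeriv (v : E) : Derivation ℂ (smoothFunctions E) (smoothFunctions E) :=
  Derivation.mk'
    { toFun f := ⟨fun x => fderiv ℝ f x v, fderiv_apply_mem f v⟩
      map_add' f g := by
        ext x
        simp [fderiv_add (differentiable f x) (differentiable g x)]
      map_smul' c f := by
        ext x
        simp [fderiv_const_smul (differentiable f x)] }
    fun f g => by
      ext x
      simp [fderiv_mul (differentiable f x) (differentiable g x)]

@[simp]
theorem coe_dirDeriv (v : E) (f : smoothFunctions E) :
    (dirDeriv v f : E → ℂ) = fun x => fderiv ℝ f x v := rfl

theorem dirDeriv_comm (v w : E) (f : smoothFunctions E) :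
    dirDeriv v (dirDeriv w f) = dirDeriv w (dirDeriv v f) := by
  ext x
  have hsymm : IsSymmSndFDerivAt ℝ (f : E → ℂ) x :=
    (contDiff f).contDiffAt.isSymmSndFDerivAt (by simpa using ENat.LEInfty.out)
  have hD : Differentiable ℝ (fderiv ℝ (f : E → ℂ)) :=
    ((contDiff f).fderiv_right (m := ∞) le_rfl).differentiable (by simp)
  simp [fderiv_clm_apply (hD x) (differentiableAt_const _), hsymm.eq]

end smoothFunctions

end Smooth

theorem pdx_eq_fderiv {f : F2} (hf : Differentiable ℝ f) (p : ℝ × ℝ) :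
    pdx f p = fderiv ℝ f p (1, 0) := by
  have hline : HasDerivAt (fun t : ℝ => (t, p.2)) (1, 0) p.1 :=
    (hasDerivAt_id p.1).prodMk (hasDerivAt_const p.1 p.2)
  exact ((hf p).hasFDerivAt.comp_hasDerivAt p.1 hline).deriv

theorem pdy_eq_fderiv {f : F2} (hf : Differentiable ℝ f) (p : ℝ × ℝ) :
    pdy f p = fderiv ℝ f p (0, 1) := by
  have hline : HasDerivAt (fun t : ℝ => (p.1, t)) (0, 1) p.2 :=
    (hasDerivAt_const p.2 p.1).prodMk (hasDerivAt_id p.2)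
  exact ((hf p).hasFDerivAt.comp_hasDerivAt p.2 hline).deriv

open smoothFunctions

theorem semiconj_pdx :
    Function.Semiconj (smoothFunctions (ℝ × ℝ)).val (dirDeriv (1, 0)) pdx := fun f => by
  ext p; simp [pdx_eq_fderiv (differentiable f)]

theorem semiconj_pdy :
    Function.Semiconj (smoothFunctions (ℝ × ℝ)).val (dirDeriv (0, 1)) pdy := fun f => by
  ext p; simp [pdy_eq_fderiv (differentiable f)]

theorem gBracket_eq_cotangentBracket : gBracket = cotangentBracket pdx := rfl

theorem S1_eq_virasoroCocycle : S1 = virasoroCocycle pdx := rfl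

theorem S2_eq_prodMap : S2 = Prod.map pdy pdy := rfl

theorem exists_prodMap_val_eq {a : F2 × F2} (ha : MemG a) :
    ∃ a' : smoothFunctions (ℝ × ℝ) × smoothFunctions (ℝ × ℝ),
      RingHom.prodMap (smoothFunctions (ℝ × ℝ)).val.toRingHom
        (smoothFunctions (ℝ × ℝ)).val.toRingHom a' = a :=
  ⟨(⟨a.1, ha.1.1⟩, ⟨a.2, ha.2.1⟩), rfl⟩

/-- **The Souriau cocycles of `g̃`.** The maps `S₁(f,u) = (0, f_{xxx})` and
`S₂(f,u) = (f_y, u_y)` both satisfy the 1-cocycle identity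
`S_i([a,b]) = [a, S_i(b)] − [b, S_i(a)]` on the looped cotangent Virasoro algebra `g̃`
(whose coadjoint representation is identified with the adjoint one via the
invariant pairing). -/
theorem souriau_cocycles (a b : F2 × F2) (ha : MemG a) (hb : MemG b) :
    S1 (gBracket a b) = gBracket a (S1 b) - gBracket b (S1 a) ∧
    S2 (gBracket a b) = gBracket a (S2 b) - gBracket b (S2 a) := by
  set ι : smoothFunctions (ℝ × ℝ) →+* F2 := (smoothFunctions (ℝ × ℝ)).val.toRingHom
  obtain ⟨a, rfl⟩ := exists_prodMap_val_eq ha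
  obtain ⟨b, rfl⟩ := exists_prodMap_val_eq hb
  rw [gBracket_eq_cotangentBracket, S1_eq_virasoroCocycle, S2_eq_prodMap]
  constructor
  · have h := congrArg (ι.prodMap ι) (virasoroCocycle_cotangentBracket (dirDeriv (1, 0)) a b)
    simpa only [map_sub, prodMap_cotangentBracket ι semiconj_pdx,
      prodMap_virasoroCocycle ι semiconj_pdx] using h
  · have h := congrArg (ι.prodMap ι)
      (prodMap_cotangentBracket_of_commute _ _ (dirDeriv_comm (E := ℝ × ℝ) (0, 1) (1, 0)) a b)
    simpa only [map_sub, prodMap_cotangentBracket ι semiconj_pdx,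
      prodMap_map ι semiconj_pdy] using h
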